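/- For the straight linear 2-tree on n vertices, (2 F_{n-1}²)/(L_{n-1} L_{n-2}) + Σ_{i=1}^{n-3} F_i F_{i+1}/(L_i L_{i+1}) = (n−1)/5 + 4F_{n-1}/(5 L_{n-1}) for all n ≥ 3, where F and L are the Fibonacci and Lucas numbers. -/
import Mathlib

def lucas : ℕ → ℚ
  | 0 => 2
  | 1 => 1
  | n + 2 => lucas (n + 1) + lucas n

lemma lucas_pos (n : ℕ) : 0 < lucas n := by
  induction n using Nat.strong_induction_on with
  | _ n ih =>
    match n with
    | 0 => norm_num [lucas]
    | 1 => norm_num [lucas]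
    | n+2 =>
      have h1 := ih n (by omega)
      have h2 := ih (n+1) (by omega)
      rw [lucas]; linarith

lemma lucas_eq (n : ℕ) : lucas n = 2 * (Nat.fib (n+1) : ℚ) - Nat.fib n := by
  induction n using Nat.strong_induction_on with
  | _ n ih =>
    match n with
    | 0 => norm_num [lucas]
    | 1 => norm_num [lucas]
    | n+2 =>
      have h1 := ih n (by omega)
      have h2 := ih (n+1) (by omega)
      rw [lucas, h1, h2]
      have e1 : (Nat.fib (n+2) : ℚ) = Nat.fib (n+1) + Nat.fib n := by
        rw [Nat.fib_add_two]; push_cast; ring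
      have e2 : (Nat.fib (n+3) : ℚ) = Nat.fib (n+2) + Nat.fib (n+1) := by
        rw [Nat.fib_add_two]; push_cast; ring
      rw [e2, e1]; ring

/-- The Fibonacci–Lucas identity
`2F_{n-1}²/(L_{n-1}L_{n-2}) + Σ_{i=1}^{n-3} F_iF_{i+1}/(L_iL_{i+1})
  = (n-1)/5 + 4F_{n-1}/(5L_{n-1})` for all `n ≥ 3`. -/
theorem stmt8 (n : ℕ) (hn : 3 ≤ n) :
    2 * (Nat.fib (n - 1) : ℚ) ^ 2 / (lucas (n - 1) * lucas (n - 2)) +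
        ∑ i ∈ Finset.Icc 1 (n - 3),
          (Nat.fib i : ℚ) * (Nat.fib (i + 1) : ℚ) / (lucas i * lucas (i + 1)) =
      ((n : ℚ) - 1) / 5 + 4 * (Nat.fib (n - 1) : ℚ) / (5 * lucas (n - 1)) := by
  obtain ⟨m, rfl⟩ : ∃ m, n = m + 3 := ⟨n - 3, by omega⟩
  clear hn
  induction m with
  | zero => norm_num [lucas]
  | succ m ih =>
    have hidx : ∀ k, k + 1 + 3 - k = 4 := by omega
    simp only [show m + 1 + 3 - 1 = m + 3 from by omega,
      show m + 1 + 3 - 2 = m + 2 from by omega,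
      show m + 1 + 3 - 3 = m + 1 from by omega,
      show m + 3 - 1 = m + 2 from by omega,
      show m + 3 - 2 = m + 1 from by omega,
      show m + 3 - 3 = m from by omega] at ih ⊢
    rw [Finset.sum_Icc_succ_top (by omega : 1 ≤ m + 1)]
    have hS : ∑ i ∈ Finset.Icc 1 m,
        (Nat.fib i : ℚ) * (Nat.fib (i + 1) : ℚ) / (lucas i * lucas (i + 1))
        = ((m : ℚ) + 3 - 1) / 5 + 4 * (Nat.fib (m + 2) : ℚ) / (5 * lucas (m + 2))
          - 2 * (Nat.fib (m + 2) : ℚ) ^ 2 / (lucas (m + 2) * lucas (m + 1)) := by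
      push_cast at ih ⊢; linarith
    rw [hS]
    have p1 := lucas_pos (m+1)
    have p2 := lucas_pos (m+2)
    have p3 := lucas_pos (m+3)
    have e1 : (Nat.fib (m+3) : ℚ) = Nat.fib (m+2) + Nat.fib (m+1) := by
      rw [Nat.fib_add_two]; push_cast; ring
    have e2 : (Nat.fib (m+4) : ℚ) = Nat.fib (m+3) + Nat.fib (m+2) := by
      rw [Nat.fib_add_two]; push_cast; ring
    have l1 : lucas (m+1) = 2 * (Nat.fib (m+2) : ℚ) - Nat.fib (m+1) := lucas_eq (m+1)
    have l2 : lucas (m+2) = 2 * (Nat.fib (m+3) : ℚ) - Nat.fib (m+2) := lucas_eq (m+2)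
    have l3 : lucas (m+3) = 2 * (Nat.fib (m+4) : ℚ) - Nat.fib (m+3) := lucas_eq (m+3)
    rw [e2, e1] at l3
    rw [e1] at l2
    have h1 : (2 * (Nat.fib (m+2) : ℚ) - Nat.fib (m+1)) ≠ 0 := by rw [← l1]; exact p1.ne'
    have h2 : (2 * ((Nat.fib (m+2) : ℚ) + Nat.fib (m+1)) - Nat.fib (m+2)) ≠ 0 := by
      rw [← l2]; exact p2.ne'
    have h3 : (2 * ((Nat.fib (m+2) : ℚ) + (Nat.fib (m+1) : ℚ) + Nat.fib (m+2)) -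
        ((Nat.fib (m+2) : ℚ) + Nat.fib (m+1))) ≠ 0 := by rw [← l3]; exact p3.ne'
    rw [l1, l2, l3, e1]
    push_cast
    field_simp
    ring
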